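/- Let (Γ,S) be a δ-hyperbolic group. There exists a constant C₁₄ ≥ 0, depending only on Γ, S and δ, such that for every g ∈ Γ of infinite order which is of minimal word length in its conjugacy class and every h ∈ Z(g) there exists k ∈ ℤ with ℓ_S(g^{−k}h) ≤ ℓ_S(g) + C₁₄. Equivalently, the extension 0 → g^ℤ → Z(g) → N(g) → 0 (with N(g) = Z(g)/g^ℤ) admits a set-theoretic section σ' : N(g) → Z(g) with ℓ_S(σ'(x)) ≤ ℓ_S(g) + C₁₄ for all x ∈ N(g). -/

import Mathlib

/-!
If the powers of `p` lie on a quasi-geodesic and `h` commutes with `p`, then `h` is a midpoint of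
`h p⁻ⁿ` and `h pⁿ`, which are `ℓ(h)`-close to `p⁻ⁿ` and `pⁿ`. For `n` large, thin triangles put
`h` near a geodesic from `p⁻ⁿ` to `pⁿ`, hence within `ℓ(p) + O(δ)` of a power of `p`.

An element `g` of minimal length in its conjugacy class with `ℓ(g) ≥ 6δ + 3` has this property:
the zigzag `1, u, g, g u, g², …` through the midpoint `u` of a geodesic from `1` to `g` has long
steps and small turns, so it is a quasi-geodesic. This gives the bound for long `g`.

There are finitely many shorter `g`, and each one is handled separately. If `g` has infinite
order, the lengths of its powers cannot grow almost ultrametrically: otherwise many powers `g ^ j`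
would move the midpoint of a geodesic to a long power by a bounded amount, which is impossible in a
finite ball. So some zigzag `1, g ^ a, g ^ (a + b), …` is again a quasi-geodesic, the lengths of
the powers of `g` grow linearly, and some power of `g` has only long conjugates. A minimal
conjugate of that power has the property above, and the bound transfers back to `g`.
-/

noncomputable section

def wordLen {Γ : Type} [Group Γ] (S : Set Γ) (g : Γ) : ℕ :=
  sInf {n | ∃ l : List Γ, (∀ x ∈ l, x ∈ S) ∧ l.length = n ∧ l.prod = g}

def dS {Γ : Type} [Group Γ] (S : Set Γ) (g h : Γ) : ℕ := wordLen S (g⁻¹ * h)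

def gpS {Γ : Type} [Group Γ] (S : Set Γ) (x y w : Γ) : ℝ :=
  ((dS S x w : ℝ) + (dS S y w : ℝ) - (dS S x y : ℝ)) / 2

def IsHypGroup {Γ : Type} [Group Γ] (S : Set Γ) (δ : ℝ) : Prop :=
  S.Finite ∧ (∀ s ∈ S, s⁻¹ ∈ S) ∧ Subgroup.closure S = ⊤ ∧
  ∀ x y z w : Γ, min (gpS S x y w) (gpS S y z w) - δ ≤ gpS S x z w

structure IsSymmGen {Γ : Type} [Group Γ] (S : Set Γ) : Prop where
  inv_mem : ∀ s ∈ S, s⁻¹ ∈ S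
  closure_eq_top : Subgroup.closure S = ⊤

variable {Γ : Type} [Group Γ] {S : Set Γ} {δ : ℝ}

theorem wordLen_le_length {g : Γ} {l : List Γ} (hl : ∀ x ∈ l, x ∈ S) (hg : l.prod = g) :
    wordLen S g ≤ l.length :=
  Nat.sInf_le ⟨l, hl, rfl, hg⟩

@[simp] theorem wordLen_one : wordLen S (1 : Γ) = 0 :=
  Nat.le_zero.mp (wordLen_le_length (l := []) (by simp) rfl)

@[simp] theorem dS_self (g : Γ) : dS S g g = 0 := by simp [dS]

@[simp] theorem dS_one_left (g : Γ) : dS S 1 g = wordLen S g := by simp [dS]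

@[simp] theorem dS_self_mul (g h : Γ) : dS S g (g * h) = wordLen S h := by simp [dS]

@[simp] theorem dS_mul_left (u g h : Γ) : dS S (u * g) (u * h) = dS S g h := by
  simp [dS, mul_assoc]

@[simp] theorem gpS_mul_left (u x y w : Γ) : gpS S (u * x) (u * y) (u * w) = gpS S x y w := by
  simp [gpS]

def Between (S : Set Γ) (a x b : Γ) : Prop := dS S a x + dS S x b = dS S a b

namespace IsSymmGen

theorem exists_list (hS : IsSymmGen S) (g : Γ) :
    ∃ l : List Γ, (∀ x ∈ l, x ∈ S) ∧ l.length = wordLen S g ∧ l.prod = g := by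
  suffices {n | ∃ l : List Γ, (∀ x ∈ l, x ∈ S) ∧ l.length = n ∧ l.prod = g}.Nonempty from
    Nat.sInf_mem this
  have hg : g ∈ (Subgroup.closure S).toSubmonoid := by rw [hS.closure_eq_top]; trivial
  rw [Subgroup.closure_toSubmonoid] at hg
  obtain ⟨l, hl, rfl⟩ := Submonoid.exists_list_of_mem_closure hg
  refine ⟨l.length, l, fun x hx => ?_, rfl, rfl⟩
  rcases hl x hx with h | h
  · exact h
  · simpa using hS.inv_mem _ h

theorem wordLen_mul_le (hS : IsSymmGen S) (g h : Γ) :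
    wordLen S (g * h) ≤ wordLen S g + wordLen S h := by
  obtain ⟨l₁, hl₁, hlen₁, rfl⟩ := hS.exists_list g
  obtain ⟨l₂, hl₂, hlen₂, rfl⟩ := hS.exists_list h
  rw [← hlen₁, ← hlen₂, ← List.length_append]
  exact wordLen_le_length (by simpa [or_imp, forall_and] using ⟨hl₁, hl₂⟩) List.prod_append

theorem wordLen_inv (hS : IsSymmGen S) (g : Γ) : wordLen S g⁻¹ = wordLen S g := by
  have key : ∀ g : Γ, wordLen S g⁻¹ ≤ wordLen S g := fun g => by
    obtain ⟨l, hl, hlen, rfl⟩ := hS.exists_list g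
    rw [← hlen, List.prod_inv_reverse, ← List.length_map (f := fun x : Γ => x⁻¹),
      ← List.length_reverse]
    exact wordLen_le_length (by simpa using fun x hx => by simpa using hS.inv_mem _ (hl _ hx)) rfl
  exact le_antisymm (key g) (by simpa using key g⁻¹)

theorem wordLen_pow_le (hS : IsSymmGen S) (g : Γ) (n : ℕ) :
    wordLen S (g ^ n) ≤ n * wordLen S g := by
  induction n with
  | zero => simp
  | succ n ih =>
    rw [pow_succ, add_one_mul]
    exact (hS.wordLen_mul_le _ _).trans (by omega)

theorem wordLen_le_conj (hS : IsSymmGen S) (u x : Γ) :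
    wordLen S x ≤ wordLen S (u * x * u⁻¹) + 2 * wordLen S u := by
  have h₁ := hS.wordLen_mul_le (u⁻¹ * (u * x * u⁻¹)) u
  have h₂ := hS.wordLen_mul_le u⁻¹ (u * x * u⁻¹)
  rw [show u⁻¹ * (u * x * u⁻¹) * u = x by group] at h₁
  rw [hS.wordLen_inv] at h₂
  omega

theorem le_wordLen_conj_of_le_wordLen_pow (hS : IsSymmGen S) {x : Γ} {K : ℕ}
    (hx : ∀ m : ℕ, m * K ≤ wordLen S (x ^ m)) (u : Γ) : K ≤ wordLen S (u * x * u⁻¹) := by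
  set m := 2 * wordLen S u + 1
  have h₁ := hS.wordLen_le_conj u (x ^ m)
  rw [← conj_pow] at h₁
  have h₂ := hS.wordLen_pow_le (u * x * u⁻¹) m
  have h₃ := hx m
  by_contra! hlt
  have h₄ : m * (wordLen S (u * x * u⁻¹) + 1) ≤ m * K := Nat.mul_le_mul_left _ hlt
  rw [Nat.mul_succ] at h₄
  omega

theorem finite_setOf_wordLen_le (hS : IsSymmGen S) (hfin : S.Finite) (n : ℕ) :
    {g : Γ | wordLen S g ≤ n}.Finite := by
  have : Finite S := hfin.to_subtype
  refine ((List.finite_length_le S n).image fun l : List S => (l.map (↑)).prod).subset ?_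
  intro g hg
  obtain ⟨l, hl, hlen, rfl⟩ := hS.exists_list g
  lift l to List S using hl
  refine ⟨l, ?_, rfl⟩
  rw [Set.mem_ofPred_eq, ← List.length_map (f := Subtype.val), hlen]
  exact hg

theorem exists_pow_forall_lt (hS : IsSymmGen S) (hfin : S.Finite) {r : Γ}
    (hr : ¬IsOfFinOrder r) (K T : ℕ) :
    ∃ n > K, T ≤ wordLen S (r ^ n) ∧ ∀ k < n, wordLen S (r ^ k) < wordLen S (r ^ n) := by
  classical
  have hex : ∃ n : ℕ, wordLen S r * K + T + 1 ≤ wordLen S (r ^ n) := by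
    by_contra! h
    refine Set.infinite_range_of_injective (injective_pow_iff_not_isOfFinOrder.mpr hr)
      ((hS.finite_setOf_wordLen_le hfin (wordLen S r * K + T + 1)).subset ?_)
    rintro _ ⟨n, rfl⟩
    exact (h n).le
  have hn := Nat.find_spec hex
  refine ⟨Nat.find hex, ?_, by omega, fun k hk => (not_le.mp (Nat.find_min hex hk)).trans_le hn⟩
  by_contra! hK
  linarith [hS.wordLen_pow_le r (Nat.find hex), Nat.mul_le_mul_left (wordLen S r) hK]

theorem dS_comm (hS : IsSymmGen S) (g h : Γ) : dS S g h = dS S h g := by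
  rw [dS, dS, ← hS.wordLen_inv]
  simp

theorem dS_mul_self_left (hS : IsSymmGen S) (g h : Γ) : dS S (g * h) g = wordLen S h := by
  rw [dS_comm hS, dS_self_mul]

theorem dS_triangle (hS : IsSymmGen S) (a b c : Γ) : dS S a c ≤ dS S a b + dS S b c := by
  simpa [dS, mul_assoc] using hS.wordLen_mul_le (a⁻¹ * b) (b⁻¹ * c)

theorem dS_eq_gpS (hS : IsSymmGen S) (x y w : Γ) :
    (dS S x y : ℝ) = dS S w x + dS S w y - 2 * gpS S x y w := by
  rw [gpS, hS.dS_comm x w, hS.dS_comm y w]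
  ring

theorem gpS_comm (hS : IsSymmGen S) (x y w : Γ) : gpS S x y w = gpS S y x w := by
  rw [gpS, gpS, hS.dS_comm x y]
  ring

theorem gpS_add_gpS (hS : IsSymmGen S) (x y w : Γ) :
    gpS S x y w + gpS S x w y = dS S w y := by
  rw [gpS, gpS, hS.dS_comm x w, hS.dS_comm y w]
  ring

theorem exists_between (hS : IsSymmGen S) (a b : Γ) {t : ℕ} (ht : t ≤ dS S a b) :
    ∃ x, Between S a x b ∧ dS S a x = t := by
  obtain ⟨l, hl, hlen, hprod⟩ := hS.exists_list (a⁻¹ * b)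
  refine ⟨a * (l.take t).prod, ?_⟩
  have h₁ : dS S a (a * (l.take t).prod) ≤ t := by
    simpa [dS] using (wordLen_le_length (fun x hx => hl x (List.mem_of_mem_take hx)) rfl).trans
      (List.length_take_le t l)
  have h₂ : dS S (a * (l.take t).prod) b ≤ dS S a b - t := by
    have e : (a * (l.take t).prod)⁻¹ * b = (l.drop t).prod := by
      rw [← List.prod_take_mul_prod_drop l t] at hprod
      rw [mul_inv_rev, mul_assoc, ← hprod, inv_mul_cancel_left]
    rw [dS, e]
    refine (wordLen_le_length (fun x hx => hl x (List.mem_of_mem_drop hx)) rfl).trans ?_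
    simp [dS, hlen]
  have h₃ := hS.dS_triangle a (a * (l.take t).prod) b
  unfold Between
  omega

end IsSymmGen

theorem Between.symm (hS : IsSymmGen S) {a x b : Γ} (h : Between S a x b) : Between S b x a := by
  rw [Between] at h ⊢
  rw [hS.dS_comm b x, hS.dS_comm x a, hS.dS_comm b a]
  omega

theorem Between.mul_left {a x b : Γ} (h : Between S a x b) (u : Γ) :
    Between S (u * a) (u * x) (u * b) := by
  simpa [Between] using h

theorem Between.gpS_eq (hS : IsSymmGen S) {a x b : Γ} (h : Between S a x b) :
    gpS S x b a = dS S a x := by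
  rw [gpS, hS.dS_comm x a, hS.dS_comm b a, ← h]
  push_cast
  ring

namespace IsHypGroup

theorem finite (hS : IsHypGroup S δ) : S.Finite := hS.1

theorem isSymmGen (hS : IsHypGroup S δ) : IsSymmGen S := ⟨hS.2.1, hS.2.2.1⟩

theorem nonneg (hS : IsHypGroup S δ) : 0 ≤ δ := by
  simpa [gpS] using hS.2.2.2 (1 : Γ) 1 1 1

theorem gpS_le_or_gpS_le (hS : IsHypGroup S δ) {x y z w : Γ} {β : ℝ} (h : gpS S x z w ≤ β) :
    gpS S x y w ≤ β + δ ∨ gpS S y z w ≤ β + δ := by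
  have := hS.2.2.2 x y z w
  rcases min_le_iff.mp (show min (gpS S x y w) (gpS S y z w) ≤ β + δ by linarith) with h | h
  exacts [.inl h, .inr h]

theorem le_gpS (hS : IsHypGroup S δ) {x y z w : Γ} {α : ℝ} (hxy : α ≤ gpS S x y w)
    (hyz : α ≤ gpS S y z w) : α - δ ≤ gpS S x z w :=
  (sub_le_sub_right (le_min hxy hyz) δ).trans (hS.2.2.2 x y z w)

theorem dS_le_of_between (hS : IsHypGroup S δ) {a e y z : Γ} {α : ℝ} (hy : Between S a y e)
    (hαy : α ≤ dS S a y) (hz : α ≤ gpS S e z a) :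
    (dS S y z : ℝ) ≤ dS S a y + dS S a z - 2 * α + 2 * δ := by
  have hye : α ≤ gpS S y e a := (hy.gpS_eq hS.isSymmGen) ▸ hαy
  linarith [hS.le_gpS hye hz, hS.isSymmGen.dS_eq_gpS y z a]

theorem dS_le_of_between_of_between (hS : IsHypGroup S δ) {a b c y z : Γ} {α : ℝ}
    (hy : Between S a y b) (hz : Between S a z c) (hαy : α ≤ dS S a y) (hαz : α ≤ dS S a z)
    (hα : α ≤ gpS S b c a) : (dS S y z : ℝ) ≤ dS S a y + dS S a z - 2 * α + 4 * δ := by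
  have hcz : α ≤ gpS S c z a := by rwa [hS.isSymmGen.gpS_comm, hz.gpS_eq hS.isSymmGen]
  linarith [hS.dS_le_of_between hy (α := α - δ) (by linarith [hS.nonneg]) (hS.le_gpS hα hcz)]

end IsHypGroup

/-- A local geodesic: long steps and small turns. Such a chain is a quasi-geodesic. -/
structure IsTautChain (S : Set Γ) (δ c : ℝ) (N : ℕ) (x : ℕ → Γ) : Prop where
  corner : ∀ m, m + 2 ≤ N → gpS S (x m) (x (m + 2)) (x (m + 1)) ≤ c
  step : ∀ m, m + 1 ≤ N → 2 * c + 3 * δ + 1 ≤ dS S (x m) (x (m + 1))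

namespace IsTautChain

variable {c : ℝ} {N : ℕ} {x : ℕ → Γ}

theorem reverse (hS : IsSymmGen S) (hx : IsTautChain S δ c N x) :
    IsTautChain S δ c N (fun k => x (N - k)) where
  corner m hm := by
    have h := hx.corner (N - m - 2) (by omega)
    rwa [show N - m - 2 + 2 = N - m by omega, show N - m - 2 + 1 = N - (m + 1) by omega,
      hS.gpS_comm, ← show N - (m + 2) = N - m - 2 by omega] at h
  step m hm := by
    have h := hx.step (N - m - 1) (by omega)
    rwa [show N - m - 1 + 1 = N - m by omega, hS.dS_comm, ← show N - (m + 1) = N - m - 1 by omega]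
      at h

theorem gpS_succ_le (hS : IsHypGroup S δ) (hc : 0 ≤ c) (hx : IsTautChain S δ c N x) :
    ∀ m, m + 1 ≤ N → gpS S (x 0) (x (m + 1)) (x m) ≤ c + δ := by
  intro m
  induction m with
  | zero =>
    intro _
    have := hS.isSymmGen.gpS_add_gpS (x 0) (x 1) (x 0)
    simp only [gpS, dS_self] at this ⊢
    linarith [hS.nonneg]
  | succ m ih =>
    intro hm
    have hback := hS.isSymmGen.gpS_add_gpS (x 0) (x (m + 1)) (x m)
    have hstep := hx.step m (by omega)
    rw [hS.isSymmGen.gpS_comm (x 0) (x m)] at hback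
    rcases hS.gpS_le_or_gpS_le (y := x 0) (hx.corner m (by omega)) with h | h
    · linarith [ih (by omega), hS.nonneg]
    · exact h

theorem gpS_le (hS : IsHypGroup S δ) (hc : 0 ≤ c) (hx : IsTautChain S δ c N x) {m : ℕ}
    (hm : m ≤ N) : gpS S (x 0) (x N) (x m) ≤ c + 2 * δ := by
  have hS' := hS.isSymmGen
  rcases Nat.lt_or_ge m N with hmN | hmN
  · have hfwd := hx.gpS_succ_le hS hc m hmN
    have hbwd := (hx.reverse hS').gpS_succ_le hS hc (N - m - 1) (by omega)
    simp only [Nat.sub_zero, show N - (N - m - 1 + 1) = m by omega,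
      show N - (N - m - 1) = m + 1 by omega] at hbwd
    have hsplit := hS'.gpS_add_gpS (x N) (x (m + 1)) (x m)
    have hstep := hx.step m (by omega)
    rcases hS.gpS_le_or_gpS_le (y := x N) hfwd with h | h <;> linarith
  · obtain rfl : m = N := by omega
    simp only [gpS, dS_self]
    linarith [hc, hS.nonneg]

theorem le_dS (hS : IsHypGroup S δ) (hc : 0 ≤ c) (hx : IsTautChain S δ c N x) :
    ∀ m, m ≤ N → (m : ℝ) ≤ dS S (x 0) (x m) := by
  intro m
  induction m with
  | zero => simp
  | succ m ih =>
    intro hm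
    have hgp := hx.gpS_succ_le hS hc m hm
    have hstep := hx.step m hm
    have hsplit := hS.isSymmGen.dS_eq_gpS (x 0) (x (m + 1)) (x m)
    rw [hS.isSymmGen.dS_comm (x m) (x 0)] at hsplit
    push_cast
    linarith [ih (by omega), hS.nonneg]

end IsTautChain

/-- The broken geodesic `1, u, G, G * u, G ^ 2, G ^ 2 * u, …`. -/
def zigzag (G u : Γ) (m : ℕ) : Γ := G ^ (m / 2) * u ^ (m % 2)

@[simp] theorem zigzag_zero (G u : Γ) : zigzag G u 0 = 1 := by simp [zigzag]

@[simp] theorem zigzag_two_mul (G u : Γ) (i : ℕ) : zigzag G u (2 * i) = G ^ i := by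
  simp [zigzag]

@[simp] theorem zigzag_two_mul_add_one (G u : Γ) (i : ℕ) :
    zigzag G u (2 * i + 1) = G ^ i * u := by
  simp [zigzag, Nat.mul_add_div]

theorem isTautChain_zigzag {G u : Γ} {c : ℝ}
    (hcorner₁ : gpS S 1 G u ≤ c) (hcorner₂ : gpS S u (G * u) G ≤ c)
    (hstep₁ : 2 * c + 3 * δ + 1 ≤ wordLen S u) (hstep₂ : 2 * c + 3 * δ + 1 ≤ dS S u G)
    (N : ℕ) : IsTautChain S δ c N (zigzag G u) where
  corner m _ := by
    obtain ⟨i, rfl | rfl⟩ := Nat.even_or_odd' m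
    · rw [← gpS_mul_left (G ^ i)] at hcorner₁
      simpa [show 2 * i + 2 = 2 * (i + 1) by ring, pow_succ] using hcorner₁
    · rw [← gpS_mul_left (G ^ i)] at hcorner₂
      simpa [show 2 * i + 1 + 2 = 2 * (i + 1) + 1 by ring,
        show 2 * i + 1 + 1 = 2 * (i + 1) by ring, pow_succ, mul_assoc] using hcorner₂
  step m _ := by
    obtain ⟨i, rfl | rfl⟩ := Nat.even_or_odd' m
    · simpa using hstep₁
    · simpa [show 2 * i + 1 + 1 = 2 * (i + 1) by ring, pow_succ] using hstep₂

/-- The powers of `p` lie on a quasi-geodesic ray. -/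
structure IsStraight (S : Set Γ) (ε : ℝ) (p : Γ) : Prop where
  wordLen_pow_add (a b : ℕ) :
    (wordLen S (p ^ a) : ℝ) + wordLen S (p ^ b) ≤ wordLen S (p ^ (a + b)) + ε
  le_wordLen_pow (n : ℕ) : n ≤ wordLen S (p ^ n)

theorem IsStraight.nonneg {ε : ℝ} {p : Γ} (hp : IsStraight S ε p) : 0 ≤ ε := by
  simpa using hp.wordLen_pow_add 0 0

theorem IsStraight.le_wordLen_conj_pow (hS : IsSymmGen S) {ε : ℝ} {p : Γ} (hp : IsStraight S ε p)
    (k : ℕ) (u : Γ) : k ≤ wordLen S (u * p ^ k * u⁻¹) :=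
  hS.le_wordLen_conj_of_le_wordLen_pow
    (fun m => by simpa [← pow_mul, mul_comm] using hp.le_wordLen_pow (k * m)) u

theorem IsHypGroup.isStraight_of_gpS_le (hS : IsHypGroup S δ) {G u : Γ} {c : ℝ} (hc : 0 ≤ c)
    (hcorner₁ : gpS S 1 G u ≤ c) (hcorner₂ : gpS S u (G * u) G ≤ c)
    (hstep₁ : 2 * c + 3 * δ + 1 ≤ wordLen S u) (hstep₂ : 2 * c + 3 * δ + 1 ≤ dS S u G) :
    IsStraight S (2 * c + 4 * δ) G where
  wordLen_pow_add a b := by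
    have h := (isTautChain_zigzag hcorner₁ hcorner₂ hstep₁ hstep₂ (2 * (a + b))).gpS_le hS hc
      (m := 2 * a) (by omega)
    have e : dS S (G ^ (a + b)) (G ^ a) = wordLen S (G ^ b) := by
      rw [hS.isSymmGen.dS_comm, pow_add, dS_self_mul]
    simp only [zigzag_zero, zigzag_two_mul, gpS, dS_one_left, e] at h
    linarith
  le_wordLen_pow n := by
    have h :=
      (isTautChain_zigzag hcorner₁ hcorner₂ hstep₁ hstep₂ (2 * n)).le_dS hS hc (2 * n) le_rfl
    simp only [zigzag_zero, zigzag_two_mul, dS_one_left] at h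
    exact_mod_cast (by push_cast at h; linarith : (n : ℝ) ≤ wordLen S (G ^ n))

/-- The zigzag through the midpoint `u` of a geodesic from `1` to `g` turns by at most `0`
at `g` because `g` is shortest among its conjugates, in particular shorter than `u⁻¹ g u`. -/
theorem IsHypGroup.isStraight_of_minimal (hS : IsHypGroup S δ) {g : Γ}
    (hmin : ∀ u : Γ, wordLen S g ≤ wordLen S (u * g * u⁻¹)) (hlong : 6 * δ + 3 ≤ wordLen S g) :
    IsStraight S (4 * δ) g := by
  have hS' := hS.isSymmGen
  obtain ⟨u, hug, hu⟩ := hS'.exists_between 1 g (t := (wordLen S g + 1) / 2) (by simp; omega)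
  rw [Between, dS_one_left, dS_one_left] at hug
  rw [dS_one_left] at hu
  have hlen : (wordLen S g : ℝ) ≤ 2 * wordLen S u ∧ 2 * (wordLen S u : ℝ) ≤ wordLen S g + 1 := by
    constructor <;> norm_cast <;> omega
  have hug' : (wordLen S u : ℝ) + dS S u g = wordLen S g := by exact_mod_cast hug
  have hconj : (wordLen S g : ℝ) ≤ dS S u (g * u) := by
    exact_mod_cast (by simpa [dS, mul_assoc] using hmin u⁻¹)
  have := hS.isStraight_of_gpS_le le_rfl (u := u) (G := g) ?_ ?_ ?_ ?_
  · simpa using this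
  · rw [gpS, dS_one_left, dS_one_left, hS'.dS_comm g u]
    linarith
  · rw [gpS, hS'.dS_mul_self_left]
    linarith
  · linarith
  · linarith

theorem exists_le_le_add_of_succ_le {f : ℕ → ℕ} {q s j : ℕ} (hstep : ∀ i, f (i + 1) ≤ f i + q)
    (h₀ : f 0 ≤ s) (hj : s ≤ f j) : ∃ i ≤ j, s ≤ f i ∧ f i ≤ s + q := by
  classical
  have hex : ∃ i, s ≤ f i := ⟨j, hj⟩
  refine ⟨Nat.find hex, Nat.find_min' hex hj, Nat.find_spec hex, ?_⟩
  cases hi : Nat.find hex with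
  | zero => omega
  | succ i =>
    have hprev := Nat.find_min hex (show i < Nat.find hex by omega)
    have := hstep i
    omega

/-- The powers `p ^ n * p ^ (-i)` lie along any geodesic from `p ^ n` to `p ^ (-n)` with gaps of
at most `ℓ(p)`, so they come close to any point `z` near such a geodesic. -/
theorem IsHypGroup.exists_dS_pow_mul_inv_le_of_gpS (hS : IsHypGroup S δ) {ε β : ℝ} {p z : Γ}
    (hp : IsStraight S ε p) (hβ : 0 ≤ β) (n : ℕ)
    (hz : dS S (p ^ n) z - β ≤ gpS S z (p ^ n)⁻¹ (p ^ n))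
    (hzn : dS S (p ^ n) z ≤ wordLen S (p ^ (2 * n))) :
    ∃ i : ℕ, (dS S z (p ^ n * (p ^ i)⁻¹) : ℝ) ≤ wordLen S p + 2 * β + ε + 2 * δ := by
  have hS' := hS.isSymmGen
  have hε := hp.nonneg
  obtain ⟨i, hi, hsi, his⟩ := exists_le_le_add_of_succ_le (f := fun i => wordLen S (p ^ i))
    (q := wordLen S p) (fun i => by simpa [pow_succ] using hS'.wordLen_mul_le (p ^ i) p) (by simp)
    hzn
  have hsi' : (dS S (p ^ n) z : ℝ) ≤ wordLen S (p ^ i) := by exact_mod_cast hsi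
  have his' : (wordLen S (p ^ i) : ℝ) ≤ dS S (p ^ n) z + wordLen S p := by exact_mod_cast his
  refine ⟨i, ?_⟩
  have hpp : p ^ n * p ^ n = p ^ (2 * n) := by rw [← pow_add, two_mul]
  have hxw : dS S (p ^ n) (p ^ n * (p ^ i)⁻¹) = wordLen S (p ^ i) := by simp [hS'.wordLen_inv]
  have hxo : dS S (p ^ n) (p ^ n)⁻¹ = wordLen S (p ^ (2 * n)) := by
    simp [dS, ← mul_inv_rev, hpp, hS'.wordLen_inv]
  have how : dS S (p ^ n)⁻¹ (p ^ n * (p ^ i)⁻¹) = wordLen S (p ^ (2 * n - i)) := by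
    have hpow : p ^ (2 * n) = p ^ (2 * n - i) * p ^ i := by rw [← pow_add, Nat.sub_add_cancel hi]
    rw [dS, inv_inv, ← mul_assoc, hpp, hpow, mul_inv_cancel_right]
  have hstr := hp.wordLen_pow_add i (2 * n - i)
  rw [Nat.add_sub_cancel' hi] at hstr
  have how' : dS S (p ^ n) z - β - ε / 2 ≤ gpS S (p ^ n)⁻¹ (p ^ n * (p ^ i)⁻¹) (p ^ n) := by
    rw [gpS, hS'.dS_comm _ (p ^ n), hS'.dS_comm _ (p ^ n), hxo, hxw, how]
    linarith
  have hzw := hS.le_gpS (by linarith : dS S (p ^ n) z - β - ε / 2 ≤ gpS S z (p ^ n)⁻¹ (p ^ n)) how'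
  have := hS'.dS_eq_gpS z (p ^ n * (p ^ i)⁻¹) (p ^ n)
  rw [hxw] at this
  linarith

/-- `h` is an `ε`-midpoint of `a` and `b`, and `e` is close to `b`, so `h` stays close to a
geodesic from `a` to `e`. -/
theorem IsHypGroup.exists_between_dS_le (hS : IsHypGroup S δ) {a b e h : Γ} {ε : ℝ}
    (hhb : dS S h b = dS S a h) (hab : 2 * (dS S a h : ℝ) ≤ dS S a b + ε)
    (hbe : (dS S b e : ℝ) + ε ≤ dS S a h) :
    ∃ y, Between S a y e ∧ dS S a y = dS S a h ∧ (dS S y h : ℝ) ≤ ε + 4 * δ := by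
  have hS' := hS.isSymmGen
  have hahb : (dS S a b : ℝ) ≤ dS S a h + dS S a h := by
    exact_mod_cast hhb ▸ hS'.dS_triangle a h b
  have haeb : (dS S a b : ℝ) ≤ dS S a e + dS S b e := by
    exact_mod_cast hS'.dS_comm e b ▸ hS'.dS_triangle a e b
  obtain ⟨y, hy, hay⟩ := hS'.exists_between a e (t := dS S a h)
    (by exact_mod_cast (by linarith : (dS S a h : ℝ) ≤ dS S a e))
  refine ⟨y, hy, hay, ?_⟩
  have heb : dS S a h - ε / 2 ≤ gpS S e b a := by
    rw [gpS, hS'.dS_comm e a, hS'.dS_comm b a, hS'.dS_comm e b]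
    linarith
  have hbh : dS S a h - ε / 2 ≤ gpS S b h a := by
    rw [gpS, hS'.dS_comm b a, hS'.dS_comm h a, hS'.dS_comm b h, hhb]
    linarith
  have := hS.dS_le_of_between hy (α := dS S a h - ε / 2 - δ) (by rw [hay]; linarith [hS.nonneg])
    (hS.le_gpS heb hbh)
  rw [hay] at this
  linarith

theorem IsHypGroup.exists_dS_pow_mul_inv_le_of_commute (hS : IsHypGroup S δ) {ε : ℝ} {p h : Γ}
    (hp : IsStraight S ε p) (hph : p * h = h * p) {n : ℕ}
    (hn : wordLen S h + ε ≤ wordLen S (p ^ n)) :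
    ∃ i : ℕ, (dS S h (p ^ n * (p ^ i)⁻¹) : ℝ) ≤ wordLen S p + 2 * ε + 8 * δ := by
  have hS' := hS.isSymmGen
  set x := p ^ n
  have hxh : x * h = h * x := (Commute.pow_left hph n).eq
  have hxx : x * x = p ^ (2 * n) := by rw [← pow_add, two_mul]
  have hah : dS S (h * x⁻¹) h = wordLen S x := by simp [dS, mul_assoc]
  have hhb : dS S h (h * x) = wordLen S x := dS_self_mul h x
  have hab : dS S (h * x⁻¹) (h * x) = wordLen S (p ^ (2 * n)) := by simp [dS, mul_assoc, hxx]
  have hbe : dS S (h * x) x = wordLen S h := by simp [← hxh, dS, hS'.wordLen_inv]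
  have hao : dS S (h * x⁻¹) x⁻¹ = wordLen S h := by
    simp [(Commute.inv_right hxh.symm).eq, dS, hS'.wordLen_inv]
  have hxo : dS S x x⁻¹ = wordLen S (p ^ (2 * n)) := by
    simp [dS, ← mul_inv_rev, hxx, hS'.wordLen_inv]
  have hL₂ : 2 * (wordLen S x : ℝ) ≤ wordLen S (p ^ (2 * n)) + ε := by
    simpa only [← two_mul] using hp.wordLen_pow_add n n
  obtain ⟨y, hy, hay, hyh⟩ := hS.exists_between_dS_le (hhb.trans hah.symm)
    (by rw [hah, hab]; exact hL₂) (by rw [hbe, hah]; exact hn)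
  have hyx := hy.symm hS'
  have hax : (dS S (h * x⁻¹) x : ℝ) ≤ wordLen S h + wordLen S (p ^ (2 * n)) := by
    have := hS'.dS_triangle (h * x⁻¹) x⁻¹ x
    rw [hao, hS'.dS_comm x⁻¹ x, hxo] at this
    exact_mod_cast this
  have hsum : (dS S x y : ℝ) + wordLen S x = dS S (h * x⁻¹) x := by
    have := hyx
    rw [Between, hS'.dS_comm y (h * x⁻¹), hay, hah, hS'.dS_comm x (h * x⁻¹)] at this
    exact_mod_cast this
  have hyo : dS S x y - δ ≤ gpS S y x⁻¹ x := by
    refine hS.le_gpS (y := h * x⁻¹) (by rw [hyx.gpS_eq hS']) ?_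
    rw [gpS, hS'.dS_comm x⁻¹ x, hxo, hao]
    linarith [hp.nonneg]
  obtain ⟨i, hi⟩ := hS.exists_dS_pow_mul_inv_le_of_gpS hp hS.nonneg n hyo
    (by exact_mod_cast (by linarith [hp.nonneg] : (dS S x y : ℝ) ≤ wordLen S (p ^ (2 * n))))
  refine ⟨i, ?_⟩
  have := hS'.dS_triangle h y (x * (p ^ i)⁻¹)
  rw [hS'.dS_comm h y] at this
  linarith [(by exact_mod_cast this : (dS S h (x * (p ^ i)⁻¹) : ℝ) ≤
    dS S y h + dS S y (x * (p ^ i)⁻¹))]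

/-- The extension `g^ℤ → Z(g) → Z(g) / g^ℤ` has a set-theoretic section `σ'` whose values have
word length at most `C`: `σ'` picks `g ^ (-k) * h` in the coset of `h`. -/
def HasBoundedSection (S : Set Γ) (g : Γ) (C : ℝ) : Prop :=
  ∀ h ∈ Subgroup.centralizer ({g} : Set Γ), ∃ k : ℤ, (wordLen S (g ^ (-k) * h) : ℝ) ≤ C

theorem HasBoundedSection.mono {g : Γ} {C C' : ℝ} (hg : HasBoundedSection S g C) (hC : C ≤ C') :
    HasBoundedSection S g C' := fun h hh => (hg h hh).imp fun _ hk => hk.trans hC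

theorem HasBoundedSection.of_pow {g : Γ} {C : ℝ} {n : ℕ} (hg : HasBoundedSection S (g ^ n) C) :
    HasBoundedSection S g C := by
  intro h hh
  have hhn : h ∈ Subgroup.centralizer ({g ^ n} : Set Γ) :=
    Subgroup.mem_centralizer_singleton_iff.mpr
      (Commute.pow_right (Subgroup.mem_centralizer_singleton_iff.mp hh) n).eq
  obtain ⟨k, hk⟩ := hg h hhn
  exact ⟨n * k, by rwa [← zpow_natCast, ← zpow_mul, ← neg_mul_eq_mul_neg] at hk⟩

theorem HasBoundedSection.of_conj (hS : IsSymmGen S) {g u : Γ} {C : ℝ}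
    (hg : HasBoundedSection S (u * g * u⁻¹) C) :
    HasBoundedSection S g (C + 2 * wordLen S u) := by
  intro h hh
  have hconj : u * h * u⁻¹ ∈ Subgroup.centralizer ({u * g * u⁻¹} : Set Γ) := by
    rw [Subgroup.mem_centralizer_singleton_iff] at hh ⊢
    simp only [mul_assoc, inv_mul_cancel_left]
    rw [← mul_assoc h, hh, mul_assoc]
  obtain ⟨k, hk⟩ := hg _ hconj
  refine ⟨k, ?_⟩
  have hlen := hS.wordLen_le_conj u (g ^ (-k) * h)
  rw [show u * (g ^ (-k) * h) * u⁻¹ = (u * g * u⁻¹) ^ (-k) * (u * h * u⁻¹) by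
    rw [conj_zpow]; group] at hlen
  have hlen' : (wordLen S (g ^ (-k) * h) : ℝ) ≤
      wordLen S ((u * g * u⁻¹) ^ (-k) * (u * h * u⁻¹)) + 2 * wordLen S u := by exact_mod_cast hlen
  linarith

theorem IsHypGroup.hasBoundedSection_of_isStraight (hS : IsHypGroup S δ) {ε : ℝ} {p : Γ}
    (hp : IsStraight S ε p) : HasBoundedSection S p (wordLen S p + 2 * ε + 8 * δ) := by
  intro h hh
  have hph : p * h = h * p := (Subgroup.mem_centralizer_singleton_iff.mp hh).symm
  set n := wordLen S h + ⌈ε⌉₊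
  have hn : wordLen S h + ε ≤ (wordLen S (p ^ n) : ℝ) := by
    have h₁ : (n : ℝ) ≤ wordLen S (p ^ n) := by exact_mod_cast hp.le_wordLen_pow n
    have h₂ : (n : ℝ) = wordLen S h + ⌈ε⌉₊ := by simp [n]
    linarith [Nat.le_ceil ε]
  obtain ⟨i, hi⟩ := hS.exists_dS_pow_mul_inv_le_of_commute hp hph hn
  refine ⟨n - i, ?_⟩
  have e : p ^ (-((n : ℤ) - i)) = (p ^ n * (p ^ i)⁻¹)⁻¹ := by
    rw [mul_inv_rev, inv_inv, ← zpow_natCast, ← zpow_natCast, ← zpow_neg, ← zpow_add]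
    ring_nf
  rw [e, ← dS, hS.isSymmGen.dS_comm]
  exact hi

/-- If `P` and `Q` commute and the four points `1, Q, Q P, P` are pairwise about `ℓ(P)` apart,
then `Q` almost fixes the midpoint `m` of a geodesic from `1` to `P`. -/
theorem IsHypGroup.dS_mul_le_of_wordLen_le (hS : IsHypGroup S δ) {P Q m : Γ} {e : ℝ}
    (hPQ : Q * P = P * Q) (hQ : (wordLen S P : ℝ) ≤ wordLen S Q + e)
    (hQP : wordLen S Q ≤ wordLen S P) (hQinvP : wordLen S (Q⁻¹ * P) ≤ wordLen S P)
    (hQPl : (wordLen S (Q * P) : ℝ) ≤ wordLen S P + e) (hP : 2 * e + 1 ≤ wordLen S P)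
    (hm : Between S 1 m P) (hm₂ : dS S 1 m = wordLen S P / 2) :
    (dS S m (Q * m) : ℝ) ≤ 4 * e + 8 * δ + 2 := by
  have hS' := hS.isSymmGen
  have hs₀ : (wordLen S P : ℝ) ≤ 2 * dS S P m ∧ 2 * (dS S P m : ℝ) ≤ wordLen S P + 1 := by
    rw [Between, dS_one_left, dS_one_left] at hm
    rw [dS_one_left] at hm₂
    rw [hS'.dS_comm P m]
    constructor <;> norm_cast <;> omega
  have hQP' : (wordLen S Q : ℝ) ≤ wordLen S P := by exact_mod_cast hQP
  have hQinvP' : (dS S P Q : ℝ) ≤ wordLen S P := by rw [hS'.dS_comm]; exact_mod_cast hQinvP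
  have hPQP : dS S P (Q * P) = wordLen S Q := by rw [hPQ, dS_self_mul]
  obtain ⟨m₁, hm₁, hPm₁⟩ := hS'.exists_between P (Q * P) (t := dS S P m)
    (by rw [hPQP]; exact_mod_cast (by linarith : (dS S P m : ℝ) ≤ wordLen S Q))
  have hmm₁ : (dS S m m₁ : ℝ) ≤ 2 * e + 4 * δ + 1 := by
    have hα : wordLen S P / 2 - e ≤ gpS S 1 (Q * P) P := by
      rw [gpS, dS_one_left, dS_one_left, hS'.dS_comm (Q * P) P, hPQP]
      linarith
    have := hS.dS_le_of_between_of_between (hm.symm hS') hm₁ (by linarith) (by rw [hPm₁]; linarith)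
      hα
    rw [hPm₁] at this
    linarith
  have hm₁Qm : (dS S m₁ (Q * m) : ℝ) ≤ 2 * e + 4 * δ + 1 := by
    have hQPm₁ : (dS S (Q * P) m₁ : ℝ) = wordLen S Q - dS S P m := by
      rw [hS'.dS_comm, ← hPQP, ← hm₁, hPm₁]
      push_cast
      ring
    have hα : wordLen S P / 2 - e - 1 / 2 ≤ gpS S P Q (Q * P) := by
      rw [gpS, hPQP, dS_self_mul]
      linarith
    have hQm : Between S (Q * P) (Q * m) Q := by simpa using (hm.symm hS').mul_left Q
    have := hS.dS_le_of_between_of_between (hm₁.symm hS') hQm (by linarith)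
      (by rw [dS_mul_left]; linarith) hα
    rw [dS_mul_left, hQPm₁] at this
    linarith
  have := hS'.dS_triangle m m₁ (Q * m)
  linarith [(by exact_mod_cast this : (dS S m (Q * m) : ℝ) ≤ dS S m m₁ + dS S m₁ (Q * m))]

theorem sub_one_le_two_mul_card_filter (p : ℕ → Prop) [DecidablePred p] (n : ℕ)
    (hp : ∀ j ∈ Finset.Ico 1 n, p j ∨ p (n - j)) :
    n - 1 ≤ 2 * ((Finset.Ico 1 n).filter p).card := by
  set J := (Finset.Ico 1 n).filter p
  have hcover : Finset.Ico 1 n ⊆ J ∪ J.image (n - ·) := by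
    intro j hj
    have hj' := Finset.mem_Ico.mp hj
    rcases hp j hj with h | h
    · exact Finset.mem_union_left _ (Finset.mem_filter.mpr ⟨hj, h⟩)
    · refine Finset.mem_union_right _ (Finset.mem_image.mpr ⟨n - j, ?_, by omega⟩)
      exact Finset.mem_filter.mpr ⟨Finset.mem_Ico.mpr (by omega), h⟩
  calc n - 1 = (Finset.Ico 1 n).card := by simp
    _ ≤ (J ∪ J.image (n - ·)).card := Finset.card_le_card hcover
    _ ≤ J.card + (J.image (n - ·)).card := Finset.card_union_le _ _
    _ ≤ 2 * J.card := by linarith [Finset.card_image_le (s := J) (f := (n - ·))]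

/-- If there were no such `a` and `b`, then for the first power `P = r ^ n` of a given length, at
least half of the `r ^ j` with `0 < j < n` would move the midpoint of a geodesic from `1` to `P`
by a bounded amount. The finiteness of balls rules this out for large `n`. -/
theorem IsHypGroup.exists_wordLen_pow_add (hS : IsHypGroup S δ) {r : Γ} (hr : ¬IsOfFinOrder r) :
    ∃ a b : ℕ, (wordLen S (r ^ a) : ℝ) + (3 * δ + 1) ≤ wordLen S (r ^ (a + b)) ∧
      (wordLen S (r ^ b) : ℝ) + (3 * δ + 1) ≤ wordLen S (r ^ (a + b)) := by
  classical
  by_contra! hflat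
  have hS' := hS.isSymmGen
  set e := 3 * δ + 1
  set B := (hS'.finite_setOf_wordLen_le hS.finite ⌈4 * e + 8 * δ + 2⌉₊).toFinset
  obtain ⟨n, hn, hW, hbelow⟩ :=
    hS'.exists_pow_forall_lt hS.finite hr (2 * B.card + 2) ⌈2 * e + 1⌉₊
  have hP : 2 * e + 1 ≤ wordLen S (r ^ n) := (Nat.le_ceil _).trans (by exact_mod_cast hW)
  set J := (Finset.Ico 1 n).filter fun j => (wordLen S (r ^ n) : ℝ) < wordLen S (r ^ j) + e
  have hJ : n - 1 ≤ 2 * J.card := by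
    refine sub_one_le_two_mul_card_filter _ n fun j hj => ?_
    by_contra! h
    have := hflat j (n - j)
    rw [Nat.add_sub_cancel' (Finset.mem_Ico.mp hj).2.le] at this
    linarith [this h.1]
  obtain ⟨mid, hmid, hmid₂⟩ := hS'.exists_between 1 (r ^ n) (t := wordLen S (r ^ n) / 2)
    (by simp; omega)
  have hmaps : ∀ j ∈ J, mid⁻¹ * (r ^ j * mid) ∈ B := by
    intro j hj
    obtain ⟨hj, hjW⟩ := Finset.mem_filter.mp hj
    obtain ⟨hj₁, hjn⟩ := Finset.mem_Ico.mp hj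
    have hQinvP : (r ^ j)⁻¹ * r ^ n = r ^ (n - j) := by
      rw [← Nat.add_sub_cancel' hjn.le, pow_add, inv_mul_cancel_left, Nat.add_sub_cancel' hjn.le]
    have hQPl : (wordLen S (r ^ j * r ^ n) : ℝ) ≤ wordLen S (r ^ n) + e := by
      have : (wordLen S (r ^ j) : ℝ) ≤ wordLen S (r ^ n) := by exact_mod_cast (hbelow j hjn).le
      rw [← pow_add]
      by_cases h : (wordLen S (r ^ j) : ℝ) + e ≤ wordLen S (r ^ (j + n))
      · linarith [hflat j n h]
      · linarith
    have := hS.dS_mul_le_of_wordLen_le (Commute.pow_pow_self r j n).eq hjW.le (hbelow j hjn).le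
      (by rw [hQinvP]; exact (hbelow (n - j) (by omega)).le) hQPl hP hmid hmid₂
    rw [Set.Finite.mem_toFinset, Set.mem_ofPred_eq, ← dS]
    exact_mod_cast this.trans (Nat.le_ceil _)
  have hinj : Set.InjOn (fun j => mid⁻¹ * (r ^ j * mid)) J := fun j _ j' _ h =>
    injective_pow_iff_not_isOfFinOrder.mpr hr (mul_right_cancel (mul_left_cancel h))
  have := Finset.card_le_card_of_injOn _ hmaps hinj
  omega

theorem IsHypGroup.exists_isStraight_pow (hS : IsHypGroup S δ) {r : Γ} (hr : ¬IsOfFinOrder r) :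
    ∃ (N : ℕ) (ε : ℝ), IsStraight S ε (r ^ N) := by
  have hS' := hS.isSymmGen
  obtain ⟨a, b, ha, hb⟩ := hS.exists_wordLen_pow_add hr
  have hsub : (wordLen S (r ^ (a + b)) : ℝ) ≤ wordLen S (r ^ a) + wordLen S (r ^ b) := by
    exact_mod_cast pow_add r a b ▸ hS'.wordLen_mul_le (r ^ a) (r ^ b)
  have hGu : dS S (r ^ (a + b)) (r ^ a) = wordLen S (r ^ b) := by
    rw [pow_add, hS'.dS_mul_self_left]
  have huG : dS S (r ^ a) (r ^ (a + b)) = wordLen S (r ^ b) := by rw [pow_add, dS_self_mul]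
  have huGu : dS S (r ^ a) (r ^ (a + b) * r ^ a) = wordLen S (r ^ (a + b)) := by
    rw [(Commute.pow_pow_self r (a + b) a).eq, dS_self_mul]
  refine ⟨a + b, _, hS.isStraight_of_gpS_le (u := r ^ a)
    (c := (wordLen S (r ^ a) + wordLen S (r ^ b) - wordLen S (r ^ (a + b))) / 2)
    (by linarith) ?_ ?_ (by linarith) (by rw [huG]; linarith)⟩
  · rw [gpS, dS_one_left, hGu, dS_one_left]
  · rw [gpS, huG, hS'.dS_mul_self_left, huGu]
    ring_nf
    linarith

theorem IsHypGroup.eventually_hasBoundedSection (hS : IsHypGroup S δ) {g : Γ}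
    (hg : ¬IsOfFinOrder g) : ∀ᶠ C in Filter.atTop, HasBoundedSection S g C := by
  have hS' := hS.isSymmGen
  obtain ⟨N, ε, hstr⟩ := hS.exists_isStraight_pow hg
  set x := (g ^ N) ^ ⌈6 * δ + 3⌉₊
  set u := Function.argmin fun v => wordLen S (v * x * v⁻¹)
  have hmin : ∀ v, wordLen S (u * x * u⁻¹) ≤ wordLen S (v * (u * x * u⁻¹) * v⁻¹) := fun v => by
    have : wordLen S (u * x * u⁻¹) ≤ wordLen S (v * u * x * (v * u)⁻¹) :=
      Function.argmin_le (fun v => wordLen S (v * x * v⁻¹)) (v * u)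
    rwa [show v * u * x * (v * u)⁻¹ = v * (u * x * u⁻¹) * v⁻¹ by group] at this
  have hlong : 6 * δ + 3 ≤ wordLen S (u * x * u⁻¹) :=
    (Nat.le_ceil _).trans (by exact_mod_cast hstr.le_wordLen_conj_pow hS' _ u)
  have hbound := ((hS.hasBoundedSection_of_isStraight
    (hS.isStraight_of_minimal hmin hlong)).of_conj hS').of_pow.of_pow
  exact (Filter.eventually_ge_atTop _).mono fun C hC => hbound.mono hC

theorem centralizer_section_bounded_general {Γ : Type} [Group Γ] (S : Set Γ) (δ : ℝ)
    (hS : IsHypGroup S δ) :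
    ∃ C₁₄ : ℝ, 0 ≤ C₁₄ ∧
      ∀ g : Γ, ¬ IsOfFinOrder g →
        (∀ u : Γ, wordLen S g ≤ wordLen S (u * g * u⁻¹)) →
        ∀ h ∈ Subgroup.centralizer ({g} : Set Γ),
          ∃ k : ℤ, (wordLen S (g ^ (-k) * h) : ℝ) ≤ (wordLen S g : ℝ) + C₁₄ := by
  have hshort : ∀ᶠ C in Filter.atTop, ∀ g ∈ {g : Γ | wordLen S g ≤ ⌈6 * δ + 3⌉₊},
      ¬IsOfFinOrder g → HasBoundedSection S g C :=
    (hS.isSymmGen.finite_setOf_wordLen_le hS.finite _).eventually_all.mpr fun _ _ =>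
      Filter.eventually_imp_distrib_left.mpr hS.eventually_hasBoundedSection
  obtain ⟨C, hCshort, hC₀, hCδ⟩ := (hshort.and ((Filter.eventually_ge_atTop 0).and
    (Filter.eventually_ge_atTop (16 * δ)))).exists
  refine ⟨C, hC₀, fun g hg hmin h hh => ?_⟩
  by_cases hlong : 6 * δ + 3 ≤ wordLen S g
  · obtain ⟨k, hk⟩ := hS.hasBoundedSection_of_isStraight (hS.isStraight_of_minimal hmin hlong) h hh
    exact ⟨k, by linarith⟩
  · obtain ⟨k, hk⟩ := hCshort g (by exact_mod_cast (not_le.mp hlong).le.trans (Nat.le_ceil _)) hg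
      h hh
    exact ⟨k, by linarith [(wordLen S g).cast_nonneg (α := ℝ)]⟩

/-- in a δ-hyperbolic group there is a constant `C₁₄` (depending only on
`Γ, S, δ`) such that for every element `g` of infinite order of minimal word length in
its conjugacy class, every element of the centralizer `Z(g)` agrees with some power of
`g` up to an element of word length at most `ℓ_S(g) + C₁₄`; i.e. the central extension
`0 → g^ℤ → Z(g) → N(g) → 0` admits a section whose values have word length at most
`ℓ_S(g) + C₁₄`. -/
theorem centralizer_section_bounded {Γ : Type} [Group Γ] (S : Set Γ) (δ : ℝ)
    (hδ : 0 ≤ δ) (hS : IsHypGroup S δ) :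
    ∃ C₁₄ : ℝ, 0 ≤ C₁₄ ∧
      ∀ g : Γ, ¬ IsOfFinOrder g →
        (∀ u : Γ, wordLen S g ≤ wordLen S (u * g * u⁻¹)) →
        ∀ h ∈ Subgroup.centralizer ({g} : Set Γ),
          ∃ k : ℤ, (wordLen S (g ^ (-k) * h) : ℝ) ≤ (wordLen S g : ℝ) + C₁₄ :=
  centralizer_section_bounded_general S δ hS
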